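/- For every natural number n, the number of pairs (x, y) of natural numbers with x < 2^n, y < 2^n, and (x XOR y : ℤ) = (y : ℤ) − (x : ℤ) is exactly 3^n. -/

import Mathlib

/-!
Since `x ^^^ y + 2 * (x &&& y) = x + y`, the equation `x ^^^ y = y - x` says exactly that
`x &&& y = x`, i.e. the set bits of `x` are among those of `y`. Each of the `n` bit positions
then independently carries one of the three bit pairs `(0, 0)`, `(0, 1)`, `(1, 1)`.
-/

open Finset

theorem Nat.xor_add_two_mul_and (m n : ℕ) : (m ^^^ n) + 2 * (m &&& n) = m + n := by
  induction m using Nat.binaryRec generalizing n with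
  | zero => simp
  | bit a m ih =>
    rw [← n.bit_bodd_div2, xor_bit, land_bit, bit_val, bit_val, bit_val, bit_val]
    have := ih n.div2
    cases a <;> cases n.bodd <;> simp <;> omega

theorem Nat.cast_xor_eq_sub_iff (m n : ℕ) : ((m ^^^ n : ℕ) : ℤ) = n - m ↔ m &&& n = m := by
  have := Nat.xor_add_two_mul_and m n
  omega

theorem Nat.bit_and_bit_eq_left_iff (a b : Bool) (m n : ℕ) :
    bit a m &&& bit b n = bit a m ↔ (a → b) ∧ m &&& n = m := by
  have bit_inj := Equiv.boolProdNatEquivNat.injective.eq_iff (a := (a && b, m &&& n)) (b := (a, m))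
  simp only [Equiv.boolProdNatEquivNat, Equiv.coe_fn_mk, Function.uncurry_apply_pair] at bit_inj
  rw [land_bit, bit_inj, Prod.mk.injEq]
  cases a <;> cases b <;> simp

def submaskPairs (n : ℕ) : Finset (ℕ × ℕ) :=
  {p ∈ range (2 ^ n) ×ˢ range (2 ^ n) | p.1 &&& p.2 = p.1}

theorem card_submaskPairs (n : ℕ) : #(submaskPairs n) = 3 ^ n := by
  induction n with
  | zero => rfl
  | succ n ih =>
    let lowBits : Finset (Bool × Bool) := {ab | ab.1 → ab.2}
    -- `((a, b), (m, k)) ↦ (bit a m, bit b k)` splits off the lowest bits.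
    let e : (Bool × Bool) × (ℕ × ℕ) ≃ ℕ × ℕ := (Equiv.prodProdProdComm Bool Bool ℕ ℕ).trans
      (Equiv.boolProdNatEquivNat.prodCongr Equiv.boolProdNatEquivNat)
    have hsplit : #(lowBits ×ˢ submaskPairs n) = #(submaskPairs (n + 1)) := by
      refine card_equiv e fun ⟨⟨a, b⟩, ⟨m, k⟩⟩ => ?_
      simp only [lowBits, e, submaskPairs, mem_product, mem_filter, mem_univ, true_and, mem_range,
        Equiv.trans_apply, Equiv.prodProdProdComm_apply, Equiv.prodCongr_apply,
        Equiv.boolProdNatEquivNat, Equiv.coe_fn_mk, Prod.map_apply, Function.uncurry_apply_pair,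
        Nat.bit_lt_two_pow_succ_iff, Nat.bit_and_bit_eq_left_iff]
      tauto
    have hlow : #lowBits = 3 := rfl
    rw [← hsplit, card_product, hlow, ih, pow_succ']

theorem card_xor_eq_sub_swap (n : ℕ) :
    ((Finset.range (2 ^ n) ×ˢ Finset.range (2 ^ n)).filter
      (fun p => ((p.1 ^^^ p.2 : ℕ) : ℤ) = (p.2 : ℤ) - (p.1 : ℤ))).card = 3 ^ n := by
  have hsubmask : (Finset.range (2 ^ n) ×ˢ Finset.range (2 ^ n)).filter
      (fun p => ((p.1 ^^^ p.2 : ℕ) : ℤ) = (p.2 : ℤ) - (p.1 : ℤ)) = submaskPairs n :=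
    filter_congr fun p _ => Nat.cast_xor_eq_sub_iff p.1 p.2
  rw [hsubmask, card_submaskPairs]
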